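/- arXiv:2507.02594 — 7 statements merged into one kernel-verified Lean document; each statement's English description precedes it below -/
import Mathlib

section
/- Let G be a finite group and suppose |G| = p^α · m where p is a prime and gcd(p, m) = 1. Then m divides [ρ(G)]_p, the exponent of p in the prime factorization of ρ(G). -/
open scoped MatrixGroups

/-- `rho G` is the product of the orders of all elements of `G`. -/
noncomputable def rho (G : Type*) [Monoid G] : ℕ := ∏ᶠ g : G, orderOf g

/-- `expRho G` is the set of exponents in the prime factorization of `rho G`. -/
noncomputable def expRho (G : Type*) [Monoid G] : Finset ℕ :=
  (rho G).factorization.support.image fun p => (rho G).factorization p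

/-!
Write `g = u v` with `u` a `p`-element and `v` a `p`-regular element commuting with `u`; both
are powers of `g`, so `ν_p(o(g)) = ν_p(o(u))` and `ν_p(ρ(G)) = ∑_u ν_p(o(u)) r(C(u))`, summed
over the `p`-elements `u`, where `r(K)` is the number of `p`-regular elements of `K`. The summand
is a class function, so the sum regroups over conjugacy classes into terms
`|u^G| ν_p(o(u)) r(C(u))`. Since `|G| = |u^G| |C(u)|`, the `p'`-part `m` of `|G|` divides each
such term as soon as the `p'`-part of `|K|` divides `r(K)` for every finite group `K`. This last
fact follows by induction from the same decomposition, which gives `|K| = ∑_u r(C_K(u))`: the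
noncentral `u` are covered by induction, and the central `p`-elements form a `p`-group, whose
order is prime to the `p'`-part.
-/

open Subgroup MulAction Finset

noncomputable def pRegularCard (p : ℕ) (G : Type*) [Group G] : ℕ :=
  Nat.card {g : G // ¬ p ∣ orderOf g}

lemma pRegularCard_congr {p : ℕ} {G G' : Type*} [Group G] [Group G'] (e : G ≃* G') :
    pRegularCard p G = pRegularCard p G' :=
  Nat.card_congr (e.toEquiv.subtypeEquiv fun g => by simp [e.orderOf_eq])

lemma map_centralizer_singleton {G G' : Type*} [Group G] [Group G'] (e : G ≃* G') (u : G) :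
    (centralizer {u}).map e.toMonoidHom = centralizer {e u} := by
  ext x
  rw [Subgroup.mem_map_equiv, mem_centralizer_singleton_iff, mem_centralizer_singleton_iff,
    ← e.symm.injective.eq_iff, map_mul, map_mul, e.symm_apply_apply]

lemma pRegularCard_centralizer_apply {p : ℕ} {G G' : Type*} [Group G] [Group G'] (e : G ≃* G')
    (u : G) : pRegularCard p (centralizer {e u}) = pRegularCard p (centralizer {u}) := by
  rw [← map_centralizer_singleton e]
  exact (pRegularCard_congr (equivMapOfInjective _ _ e.injective)).symm

section PowerDecomposition

variable {H : Type*} [Group H] {q m d : ℕ}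

-- When `g ^ (q * m) = 1` and `m * d ≡ 1 [MOD q]`, `g ^ (m * d)` is the `q`-part of `g` and
-- `(g ^ (m * d))⁻¹ * g` its `m`-part.

lemma pow_mul_eq_self_of_pow_eq_one (hd : m * d ≡ 1 [MOD q]) {u : H} (hu : u ^ q = 1) :
    u ^ (m * d) = u := by
  conv_rhs => rw [← pow_one u]
  exact pow_eq_pow_iff_modEq.mpr (hd.of_dvd (orderOf_dvd_of_pow_eq_one hu))

lemma Commute.mul_pow_eq_left (hd : m * d ≡ 1 [MOD q]) {u v : H} (huv : Commute u v)
    (hu : u ^ q = 1) (hv : v ^ m = 1) : (u * v) ^ (m * d) = u := by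
  rw [huv.mul_pow, pow_mul_eq_self_of_pow_eq_one hd hu, pow_mul v, hv, one_pow, mul_one]

variable (hqm : ∀ g : H, g ^ (q * m) = 1)
include hqm

lemma pow_pow_eq_one_of_forall (g : H) : (g ^ (m * d)) ^ q = 1 := by
  rw [← pow_mul, show m * d * q = q * m * d by ring, pow_mul, hqm, one_pow]

lemma inv_pow_mul_self_pow_eq_one (hd : m * d ≡ 1 [MOD q]) (g : H) :
    ((g ^ (m * d))⁻¹ * g) ^ m = 1 := by
  have hgm : g ^ (m * d * m) = g ^ (1 * m) :=
    pow_eq_pow_iff_modEq.mpr ((hd.mul_right' m).of_dvd (orderOf_dvd_of_pow_eq_one (hqm g)))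
  rw [((Commute.refl g).pow_left _).inv_left.mul_pow, inv_pow, ← pow_mul, hgm, one_mul,
    inv_mul_cancel]

lemma card_pow_eq_eq_card_centralizer (hd : m * d ≡ 1 [MOD q]) {u : H} (hu : u ^ q = 1) :
    Nat.card {g : H // g ^ (m * d) = u} = Nat.card {v : centralizer {u} // (v : H) ^ m = 1} := by
  refine Nat.card_congr
    { toFun g := ⟨⟨u⁻¹ * g, mem_centralizer_singleton_iff.mpr ?_⟩, ?_⟩
      invFun v := ⟨u * v, Commute.mul_pow_eq_left hd
        (mem_centralizer_singleton_iff.mp v.1.2).symm hu v.2⟩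
      left_inv g := by simp
      right_inv v := by simp }
  all_goals obtain ⟨g, rfl⟩ := g
  · exact ((Commute.refl _).inv_right.mul_right ((Commute.refl g).pow_left _)).eq.symm
  · exact inv_pow_mul_self_pow_eq_one hqm hd g

end PowerDecomposition

theorem MulAction.dvd_sum_of_dvd_card_orbit_mul {G X : Type*} [Group G] [MulAction G X]
    [Fintype X] {m : ℕ} {w : X → ℕ} (hw : ∀ (g : G) x, w (g • x) = w x)
    (hdvd : ∀ x, m ∣ Nat.card (orbit G x) * w x) : m ∣ ∑ x, w x := by
  classical
  rw [← (selfEquivSigmaOrbits G X).symm.sum_comp, Fintype.sum_sigma]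
  refine dvd_sum fun ω _ => ?_
  rw [sum_const_nat fun x _ => ?_, card_univ, ← Nat.card_eq_fintype_card]
  · exact hdvd _
  · obtain ⟨g, hg⟩ := mem_orbit_iff.mp x.2
    change w x = _
    rw [← hg, hw]

lemma card_orbit_conjAct_mul_card_centralizer {H : Type*} [Group H] (u : H) :
    Nat.card (orbit (ConjAct H) u) * Nat.card (centralizer {u}) = Nat.card H := by
  rw [nat_card_centralizer_nat_card_stabilizer,
    Nat.card_congr (orbitEquivQuotientStabilizer _ u), ← Subgroup.index, index_mul_card]
  rfl

lemma ordCompl_card_dvd_sum_mul_pRegularCard {p : ℕ} {H : Type*} [Group H] [Fintype H]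
    (P : H → Prop) [DecidablePred P] (c : H → ℕ)
    (hP : ∀ g u : H, P (g * u * g⁻¹) ↔ P u) (hc : ∀ g u : H, c (g * u * g⁻¹) = c u)
    (hr : ∀ u, P u →
      ordCompl[p] (Nat.card (centralizer {u})) ∣ pRegularCard p (centralizer {u})) :
    ordCompl[p] (Nat.card H) ∣
      ∑ u ∈ univ.filter P, c u * pRegularCard p (centralizer {u}) := by
  rw [sum_filter]
  refine dvd_sum_of_dvd_card_orbit_mul (G := ConjAct H) (fun g u => ?_) fun u => ?_
  · rw [ConjAct.smul_eq_mulAut_conj, pRegularCard_centralizer_apply]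
    simp only [MulAut.conj_apply, hP, hc]
  · split_ifs with hu
    · rw [← card_orbit_conjAct_mul_card_centralizer u, Nat.ordCompl_mul]
      exact (mul_dvd_mul (Nat.ordCompl_dvd _ p) (hr u hu)).trans
        (mul_dvd_mul_left _ (dvd_mul_left _ _))
    · exact dvd_zero _

section PRegular

variable {p a m d : ℕ} {H : Type*} [Group H]

lemma pow_eq_one_iff_not_dvd_orderOf (hp : p.Prime) (hpm : ¬ p ∣ m)
    (hqm : ∀ g : H, g ^ (p ^ a * m) = 1) (v : H) : v ^ m = 1 ↔ ¬ p ∣ orderOf v := by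
  refine ⟨fun hv hpv => hpm (hpv.trans (orderOf_dvd_of_pow_eq_one hv)), fun hv => ?_⟩
  rw [← orderOf_dvd_iff_pow_eq_one]
  exact ((hp.coprime_iff_not_dvd.mpr hv).symm.pow_right a).dvd_of_dvd_mul_left
    (orderOf_dvd_of_pow_eq_one (hqm v))

lemma sum_comp_pow_eq_sum_mul_pRegularCard [Fintype H] [DecidableEq H] (hp : p.Prime)
    (hpm : ¬ p ∣ m) (hqm : ∀ g : H, g ^ (p ^ a * m) = 1) (hd : m * d ≡ 1 [MOD p ^ a])
    (c : H → ℕ) :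
    ∑ g, c (g ^ (m * d)) =
      ∑ u ∈ univ.filter (· ^ p ^ a = 1), c u * pRegularCard p (centralizer {u}) := by
  rw [← sum_fiberwise_of_maps_to (t := univ.filter (· ^ p ^ a = 1)) (g := (· ^ (m * d)))
    fun g _ => mem_filter.mpr ⟨mem_univ _, pow_pow_eq_one_of_forall hqm g⟩]
  refine sum_congr rfl fun u hu => ?_
  rw [sum_const_nat fun g hg => by rw [(mem_filter.mp hg).2], ← Fintype.card_subtype,
    ← Nat.card_eq_fintype_card, card_pow_eq_eq_card_centralizer hqm hd (mem_filter.mp hu).2,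
    mul_comm]
  congr 1
  exact Nat.card_congr <| Equiv.subtypeEquivRight fun v => by
    rw [pow_eq_one_iff_not_dvd_orderOf hp hpm hqm, Subgroup.orderOf_coe]

lemma factorization_orderOf_pow_eq [Finite H] (hp : p.Prime) (hpm : ¬ p ∣ m)
    (hqm : ∀ g : H, g ^ (p ^ a * m) = 1) (hd : m * d ≡ 1 [MOD p ^ a]) (g : H) :
    (orderOf (g ^ (m * d))).factorization p = (orderOf g).factorization p := by
  set u := g ^ (m * d)
  have hv : ¬ p ∣ orderOf (u⁻¹ * g) :=
    (pow_eq_one_iff_not_dvd_orderOf hp hpm hqm _).mp (inv_pow_mul_self_pow_eq_one hqm hd g)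
  have hcop : (orderOf u).Coprime (orderOf (u⁻¹ * g)) :=
    ((hp.coprime_iff_not_dvd.mpr hv).pow_left a).coprime_dvd_left
      (orderOf_dvd_of_pow_eq_one (pow_pow_eq_one_of_forall hqm g))
  have hcomm : Commute u (u⁻¹ * g) :=
    (Commute.refl u).inv_right.mul_right ((Commute.refl g).pow_left _)
  conv_rhs => rw [← mul_inv_cancel_left u g, hcomm.orderOf_mul_eq_mul_orderOf_of_coprime hcop,
    Nat.factorization_mul_apply_of_coprime hcop, Nat.factorization_eq_zero_of_not_dvd hv,
    add_zero]

lemma exists_card_pow_eq_one_eq_prime_pow {A : Type*} [Group A] [IsMulCommutative A] [Finite A]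
    (hp : p.Prime) (a : ℕ) : ∃ c, Nat.card {z : A // z ^ p ^ a = 1} = p ^ c := by
  have : Fact p.Prime := ⟨hp⟩
  open scoped IsMulCommutative in
  have hK : IsPGroup p (powMonoidHom (p ^ a) : A →* A).ker := fun z => ⟨a, Subtype.ext z.2⟩
  obtain ⟨c, hc⟩ := IsPGroup.iff_card.mp hK
  exact ⟨c, hc⟩

lemma exists_card_pow_eq_one_mem_center_eq_prime_pow [Finite H] (hp : p.Prime) (a : ℕ) :
    ∃ c, Nat.card {u : H // u ^ p ^ a = 1 ∧ u ∈ center H} = p ^ c := by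
  obtain ⟨c, hc⟩ := exists_card_pow_eq_one_eq_prime_pow (A := center H) hp a
  refine ⟨c, hc ▸ Nat.card_congr ?_⟩
  exact (Equiv.subtypeEquivRight fun _ => and_comm).trans <|
    (Equiv.subtypeSubtypeEquivSubtypeInter (· ∈ center H) (· ^ p ^ a = 1)).symm.trans <|
    Equiv.subtypeEquivRight fun z => by rw [← Subgroup.coe_pow, OneMemClass.coe_eq_one]

lemma card_centralizer_lt_of_notMem_center [Finite H] {u : H} (hu : u ∉ center H) :
    Nat.card (centralizer {u}) < Nat.card H :=
  (card_le_card_group _).lt_of_ne fun h => hu <|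
    Set.singleton_subset_iff.mp (centralizer_eq_top_iff_subset.mp (eq_top_of_card_eq _ h))

lemma conj_mem_center_iff (g u : H) : g * u * g⁻¹ ∈ center H ↔ u ∈ center H :=
  ⟨fun h => by simpa [mul_assoc] using Normal.conj_mem inferInstance _ h g⁻¹,
    fun h => Normal.conj_mem inferInstance u h g⟩

theorem ordCompl_card_dvd_pRegularCard (hp : p.Prime) (H : Type*) [Group H] [Finite H] :
    ordCompl[p] (Nat.card H) ∣ pRegularCard p H := by
  induction hn : Nat.card H using Nat.strong_induction_on generalizing H with
  | _ n ih =>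
  classical
  have := Fintype.ofFinite H
  have hn0 : n ≠ 0 := hn ▸ Nat.card_pos.ne'
  set a := n.factorization p
  set m := ordCompl[p] n
  have hpm : ¬ p ∣ m := Nat.not_dvd_ordCompl hp hn0
  have hqm : ∀ g : H, g ^ (p ^ a * m) = 1 := fun g => by
    rw [Nat.ordProj_mul_ordCompl_eq_self, ← hn]
    exact pow_card_eq_one'
  obtain ⟨d, -, hd⟩ := Nat.exists_mul_mod_eq_of_coprime 1
    ((Nat.coprime_ordCompl hp hn0).symm.pow_right a) (pow_ne_zero a hp.ne_zero)
  have hcount := sum_comp_pow_eq_sum_mul_pRegularCard hp hpm hqm hd (fun _ => 1)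
  simp only [sum_const, card_univ, smul_eq_mul, mul_one, one_mul, ← Nat.card_eq_fintype_card,
    hn] at hcount
  rw [← sum_filter_add_sum_filter_not _ (· ∈ center H), filter_filter, filter_filter] at hcount
  have hcentral : ∑ u ∈ univ.filter (fun u => u ^ p ^ a = 1 ∧ u ∈ center H),
      pRegularCard p (centralizer {u}) =
        #(univ.filter fun u => u ^ p ^ a = 1 ∧ u ∈ center H) * pRegularCard p H :=
    sum_const_nat fun u hu => by
      rw [centralizer_eq_top_iff_subset.mpr
        (Set.singleton_subset_iff.mpr (mem_filter.mp hu).2.2), pRegularCard_congr topEquiv]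
  have hnoncentral : m ∣ ∑ u ∈ univ.filter (fun u => u ^ p ^ a = 1 ∧ u ∉ center H),
      pRegularCard p (centralizer {u}) := by
    simpa only [one_mul, hn] using ordCompl_card_dvd_sum_mul_pRegularCard (p := p)
      (fun u => u ^ p ^ a = 1 ∧ u ∉ center H) (fun _ => 1)
      (fun g u => by rw [conj_pow, conj_eq_one_iff, conj_mem_center_iff]) (fun _ _ => rfl)
      fun u hu => ih _ (hn ▸ card_centralizer_lt_of_notMem_center hu.2) _ rfl
  obtain ⟨c, hc⟩ := exists_card_pow_eq_one_mem_center_eq_prime_pow (H := H) hp a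
  rw [Nat.card_eq_fintype_card, Fintype.card_subtype] at hc
  have hm : m ∣ p ^ c * pRegularCard p H := by
    rw [← hc, ← hcentral, ← Nat.dvd_add_left hnoncentral, ← hcount]
    exact Nat.ordCompl_dvd n p
  exact ((Nat.coprime_ordCompl hp hn0).symm.pow_right c).dvd_of_dvd_mul_left hm

end PRegular

lemma factorization_rho (G : Type*) [Group G] [Fintype G] (p : ℕ) :
    (rho G).factorization p = ∑ g : G, (orderOf g).factorization p := by
  rw [rho, finprod_eq_prod_of_fintype, Nat.factorization_prod fun g _ => (orderOf_pos g).ne',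
    Finset.sum_apply']

theorem p_part_divisible (G : Type*) [Group G] [Finite G]
    (p α m : ℕ) (hp : p.Prime) (hG : Nat.card G = p ^ α * m)
    (hcop : Nat.Coprime p m) :
    m ∣ (rho G).factorization p := by
  classical
  have := Fintype.ofFinite G
  have hpm : ¬ p ∣ m := hp.coprime_iff_not_dvd.mp hcop
  have hqm : ∀ g : G, g ^ (p ^ α * m) = 1 := fun g => hG ▸ pow_card_eq_one'
  obtain ⟨d, -, hd⟩ := Nat.exists_mul_mod_eq_of_coprime 1 (hcop.symm.pow_right α)
    (pow_ne_zero α hp.ne_zero)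
  have hm : ordCompl[p] (Nat.card G) = m := by rw [hG, Nat.ordCompl_pow_mul_of_not_dvd α hp hpm]
  rw [factorization_rho, ← sum_congr rfl fun g _ => factorization_orderOf_pow_eq hp hpm hqm hd g,
    sum_comp_pow_eq_sum_mul_pRegularCard hp hpm hqm hd fun u => (orderOf u).factorization p, ← hm]
  exact ordCompl_card_dvd_sum_mul_pRegularCard _ _
    (fun g u => by rw [conj_pow, conj_eq_one_iff])
    (fun g u => by rw [← MulAut.conj_apply, MulEquiv.orderOf_eq])
    fun u _ => ordCompl_card_dvd_pRegularCard hp _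
end

section
/- Let G be a finite group whose order is divisible by the prime p. Then p − 1 divides [ρ(G)]_p, the exponent of p in the prime factorization of ρ(G). -/
open scoped MatrixGroups

open Finset Subgroup in
lemma totient_dvd_card_orderOf_eq {G : Type*} [Group G] [Fintype G] (d : ℕ) :
    Nat.totient d ∣ #(Finset.univ.filter (fun g : G => orderOf g = d)) := by
  classical
  set S := Finset.univ.filter (fun g : G => orderOf g = d) with hS
  rw [card_eq_sum_card_fiberwise (f := fun g : G => Subgroup.zpowers g)
    (t := S.image fun g => Subgroup.zpowers g) (fun x hx => mem_image_of_mem _ hx)]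
  apply Finset.dvd_sum
  intro H hH
  obtain ⟨a, ha, rfl⟩ := Finset.mem_image.1 hH
  rw [hS, Finset.mem_filter] at ha
  have had : orderOf a = d := ha.2
  have hcard : Nat.card (zpowers a) = d := by rw [Nat.card_zpowers, had]
  have key : S.filter (fun g => zpowers g = zpowers a) =
      Finset.image (fun h : zpowers a => (h : G))
        (Finset.univ.filter fun h : zpowers a => orderOf h = d) := by
    ext g
    simp only [hS, Finset.mem_filter, Finset.mem_univ, true_and, Finset.mem_image,
      Finset.filter_filter]
    constructor
    · rintro ⟨h1, h2⟩
      have hg : g ∈ zpowers a := h2 ▸ mem_zpowers g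
      exact ⟨⟨g, hg⟩, by rwa [orderOf_mk], rfl⟩
    · rintro ⟨⟨h, hmem⟩, h1, rfl⟩
      rw [orderOf_mk] at h1
      refine ⟨h1, Subgroup.eq_of_le_of_card_ge ?_ ?_⟩
      · rwa [zpowers_le]
      · rw [hcard, Nat.card_zpowers, h1]
  rw [key, Finset.card_image_of_injective _ Subtype.val_injective]
  have hft : Fintype.card (zpowers a) = d := by rw [Fintype.card_zpowers, had]
  haveI : IsCyclic (zpowers a) :=
    ⟨⟨⟨a, mem_zpowers a⟩, fun ⟨x, hx⟩ => by
      obtain ⟨k, hk⟩ := hx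
      exact ⟨k, Subtype.ext (by simpa using hk)⟩⟩⟩
  have h2 : #{h : zpowers a | orderOf h = d} = Nat.totient d :=
    IsCyclic.card_orderOf_eq_totient (hft ▸ dvd_rfl)
  exact h2 ▸ dvd_rfl

theorem totient_divides_p_part (G : Type*) [Group G] [Finite G]
    (p : ℕ) (hp : p.Prime) (hdvd : p ∣ Nat.card G) :
    (p - 1) ∣ (rho G).factorization p := by
  classical
  haveI := Fintype.ofFinite G
  rw [rho, finprod_eq_prod_of_fintype,
    Nat.factorization_prod (fun g _ => (orderOf_pos g).ne'),
    Finsupp.finset_sum_apply]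
  rw [← Finset.sum_fiberwise_of_maps_to (g := orderOf)
      (t := Finset.univ.image orderOf)
      (fun x _ => Finset.mem_image_of_mem orderOf (Finset.mem_univ x))
      (fun g : G => ((orderOf g).factorization) p)]
  apply Finset.dvd_sum
  intro d hd
  have : ∑ x ∈ Finset.univ.filter (fun x : G => orderOf x = d),
      ((orderOf x).factorization) p
      = (Finset.univ.filter (fun x : G => orderOf x = d)).card * d.factorization p := by
    rw [Finset.sum_congr rfl (fun x hx => by
      rw [(Finset.mem_filter.1 hx).2]), Finset.sum_const, smul_eq_mul]
  rw [this]
  rcases Nat.eq_zero_or_pos (d.factorization p) with h0 | hpos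
  · simp [h0]
  · have hpd : p ∣ d := Nat.dvd_of_factorization_pos hpos.ne'
    have h1 : (p - 1) ∣ Nat.totient d := by
      rw [← Nat.totient_prime hp]
      exact Nat.totient_dvd_of_dvd hpd
    exact Dvd.dvd.mul_right (h1.trans (totient_dvd_card_orderOf_eq d)) _
end

section
/- Let G be a finite group and let p be an odd prime dividing |G|. Then [ρ(G)]_p, the exponent of p in the prime factorization of ρ(G), is even. -/
open scoped MatrixGroups

theorem odd_prime_part_even (G : Type*) [Group G] [Finite G]
    (p : ℕ) (hp : p.Prime) (hodd : Odd p) (hdvd : p ∣ Nat.card G) :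
    Even ((rho G).factorization p) := by
  classical
  have : Fintype G := Fintype.ofFinite G
  have hrho : rho G = ∏ g : G, orderOf g := finprod_eq_prod_of_fintype _
  have hne : ∀ g ∈ (Finset.univ : Finset G), orderOf g ≠ 0 := fun g _ =>
    (orderOf_pos g).ne'
  have hfact : (rho G).factorization p =
      ∑ g : G, (orderOf g).factorization p := by
    rw [hrho, Nat.factorization_prod hne, Finset.sum_apply']
  rw [hfact]
  -- fixed points have zero valuation
  have hfix : ∀ g : G, g⁻¹ = g → (orderOf g).factorization p = 0 := by
    intro g hg
    have h2 : orderOf g ∣ 2 := orderOf_dvd_of_pow_eq_one (by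
      have : g * g = 1 := by
        nth_rewrite 1 [← hg]; exact inv_mul_cancel g
      simpa [pow_two] using this)
    apply Nat.factorization_eq_zero_of_not_dvd
    intro hpdvd
    have : p ∣ 2 := hpdvd.trans h2
    have := (Nat.prime_dvd_prime_iff_eq hp Nat.prime_two).mp this
    rw [this, Nat.odd_iff] at hodd
    omega
  -- sum is even via the involution g ↦ g⁻¹ over ZMod 2
  have key : ((∑ g : G, (orderOf g).factorization p : ℕ) : ZMod 2) = 0 := by
    push_cast
    refine Finset.sum_involution (fun g _ => g⁻¹) ?_ ?_ ?_ ?_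
    · intro a _
      have : orderOf a⁻¹ = orderOf a := orderOf_inv a
      rw [this]
      have : ((orderOf a).factorization p : ZMod 2) +
          ((orderOf a).factorization p : ZMod 2) = 0 := by
        rw [← two_mul]
        exact mul_eq_zero_of_left (by decide) _
      exact this
    · intro a _ hne' heq
      exact hne' (by rw [hfix a heq]; simp)
    · intro a _; exact Finset.mem_univ _
    · intro a _; simp
  exact even_iff_two_dvd.mpr ((ZMod.natCast_eq_zero_iff _ 2).mp key)
end

section
/- Let G be a finite group of even order. Then [ρ(G)]_2, the exponent of 2 in the prime factorization of ρ(G), is odd. -/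
open scoped MatrixGroups

theorem two_part_odd (G : Type*) [Group G] [Finite G]
    (hdvd : 2 ∣ Nat.card G) :
    Odd ((rho G).factorization 2) := by
  classical
  cases nonempty_fintype G
  have hrho : rho G = ∏ g : G, orderOf g := finprod_eq_prod_of_fintype _
  set f : G → ℕ := fun g => (orderOf g).factorization 2 with hf
  have hfact : (rho G).factorization 2 = ∑ g : G, f g := by
    rw [hrho, Nat.factorization_prod (fun g _ => (orderOf_pos g).ne')]
    simp [hf]
  rw [hfact]
  -- it suffices to show the sum is 1 mod 2
  have htwo : (2 : ZMod 2) = 0 := by decide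
  have hself : ∀ x : ZMod 2, x + x = 0 := by decide
  suffices h : ((∑ g : G, f g : ℕ) : ZMod 2) = 1 by
    rw [Nat.odd_iff]
    rcases Nat.mod_two_eq_zero_or_one (∑ g : G, f g) with h0 | h1
    · exfalso
      have : ((∑ g : G, f g : ℕ) : ZMod 2) = 0 := by
        rw [ZMod.natCast_eq_zero_iff]
        exact Nat.dvd_of_mod_eq_zero h0
      rw [this] at h
      exact absurd h (by decide)
    · exact h1
  push_cast
  set S : Finset G := Finset.univ.filter (fun g : G => g⁻¹ = g) with hS
  have hmemS : ∀ g : G, g ∈ S ↔ g⁻¹ = g := by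
    intro g; simp [hS]
  have hmemSc : ∀ g : G, g ∈ Sᶜ ↔ g⁻¹ ≠ g := by
    intro g; simp [hS]
  -- sum over the complement is 0 (pairing g with g⁻¹)
  have hSc : ∑ g ∈ Sᶜ, ((f g : ZMod 2)) = 0 := by
    refine Finset.sum_involution (fun a _ => a⁻¹) ?_ ?_ ?_ ?_
    · intro a _
      have : f a⁻¹ = f a := by simp [hf, orderOf_inv]
      rw [this]; exact hself _
    · intro a ha _
      exact (hmemSc a).mp ha
    · intro a ha
      rw [hmemSc] at ha ⊢
      rw [inv_inv]
      intro h; exact ha h.symm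
    · intro a _; exact inv_inv a
  -- the complement has even cardinality (same pairing)
  have hScCard : ((Sᶜ.card : ZMod 2)) = 0 := by
    have : ∑ _g ∈ Sᶜ, ((1 : ZMod 2)) = 0 := by
      refine Finset.sum_involution (fun a _ => a⁻¹) ?_ ?_ ?_ ?_
      · intro a _; exact hself 1
      · intro a ha _; exact (hmemSc a).mp ha
      · intro a ha
        rw [hmemSc] at ha ⊢
        rw [inv_inv]
        intro h; exact ha h.symm
      · intro a _; exact inv_inv a
    simpa using this
  -- hence S has even cardinality
  have hScard : ((S.card : ZMod 2)) = 0 := by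
    have hcards : S.card + Sᶜ.card = Fintype.card G := Finset.card_add_card_compl S
    have hcardG : ((Fintype.card G : ℕ) : ZMod 2) = 0 := by
      rw [ZMod.natCast_eq_zero_iff]
      rwa [Nat.card_eq_fintype_card] at hdvd
    have := congrArg (fun n : ℕ => (n : ZMod 2)) hcards
    push_cast at this
    rw [hScCard, hcardG, add_zero] at this
    exact this
  -- sum over S
  have h1S : (1 : G) ∈ S := (hmemS 1).mpr (by simp)
  have hSsum : ∑ g ∈ S, ((f g : ZMod 2)) = (S.card : ZMod 2) + 1 := by
    rw [← Finset.sum_erase_add S _ h1S]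
    have hf1 : f 1 = 0 := by simp [hf]
    have hconst : ∀ g ∈ S.erase 1, ((f g : ZMod 2)) = 1 := by
      intro g hg
      have hg1 : g ≠ 1 := Finset.ne_of_mem_erase hg
      have hginv : g⁻¹ = g := (hmemS g).mp (Finset.mem_of_mem_erase hg)
      have hord : orderOf g = 2 := by
        have hsq : g * g = 1 := by nth_rewrite 1 [← hginv]; exact inv_mul_cancel g
        have hdvd2 : orderOf g ∣ 2 := orderOf_dvd_of_pow_eq_one (by rw [pow_two]; exact hsq)
        rcases (Nat.prime_two.eq_one_or_self_of_dvd _ hdvd2) with h | h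
        · exact absurd (orderOf_eq_one_iff.mp h) hg1
        · exact h
      have hfg : f g = 1 := by
        show (orderOf g).factorization 2 = 1
        rw [hord]
        exact Nat.Prime.factorization_self Nat.prime_two
      rw [hfg, Nat.cast_one]
    rw [Finset.sum_congr rfl hconst, hf1, Finset.sum_const,
      Finset.card_erase_of_mem h1S]
    have hpos : 1 ≤ S.card := Finset.card_pos.mpr ⟨1, h1S⟩
    rw [Nat.cast_zero, add_zero, nsmul_eq_mul, mul_one, Nat.cast_sub hpos,
      Nat.cast_one, sub_eq_add_neg, show (-1 : ZMod 2) = 1 from by decide]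
  calc ∑ g : G, ((f g : ZMod 2))
      = ∑ g ∈ S, ((f g : ZMod 2)) + ∑ g ∈ Sᶜ, ((f g : ZMod 2)) :=
        (Finset.sum_add_sum_compl S _).symm
    _ = 1 := by rw [hSc, hSsum, hScard, add_zero, zero_add]
end

section
/- Let G₁ and G₂ be finite groups with gcd(|G₁|, |G₂|) = 1. Then ρ(G₁ × G₂) = ρ(G₁)^{|G₂|} · ρ(G₂)^{|G₁|}. -/
open scoped MatrixGroups

theorem rho_prod_of_coprime (G₁ G₂ : Type*) [Group G₁] [Finite G₁] [Group G₂] [Finite G₂]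
    (hcop : Nat.Coprime (Nat.card G₁) (Nat.card G₂)) :
    rho (G₁ × G₂) = rho G₁ ^ Nat.card G₂ * rho G₂ ^ Nat.card G₁ := by
  have : Fintype G₁ := Fintype.ofFinite G₁
  have : Fintype G₂ := Fintype.ofFinite G₂
  have key : ∀ (x : G₁ × G₂), orderOf x = orderOf x.1 * orderOf x.2 := by
    intro x
    rw [Prod.orderOf]
    exact Nat.Coprime.lcm_eq_mul
      ((hcop.coprime_dvd_left (orderOf_dvd_natCard x.1)).coprime_dvd_right
        (orderOf_dvd_natCard x.2))
  simp only [rho, finprod_eq_prod_of_fintype]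
  rw [Fintype.prod_prod_type]
  simp only [key]
  simp only [Finset.prod_mul_distrib, Finset.prod_const, Finset.card_univ,
    Finset.prod_pow, Nat.card_eq_fintype_card, mul_comm, mul_pow]
end

section
/- Let p be a prime, let P be a cyclic p-group, let F be a nontrivial finite group with gcd(p, |F|) = 1, and let φ : F → Aut(P) be an action of F on P, with G = P ⋊_φ F the corresponding semidirect product. Then ρ(G) = ρ(P)^{|ker φ|} · ρ(F)^{|P|}, where ker φ equals the centralizer of P in F. -/
open scoped MatrixGroups

open Finset SemidirectProduct

lemma step_aux {p m a : ℕ} (hpm : p ∣ m) (ha : a ≡ 1 [MOD m]) :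
    a ^ p ≡ 1 [MOD m * p] := by
  have h1 : (m : ℤ) ∣ (a : ℤ) - 1 := by
    have h := (Nat.modEq_iff_dvd).mp ha
    exact dvd_sub_comm.mp h
  have hp1 : (p : ℤ) ∣ (a : ℤ) - 1 := dvd_trans (Int.natCast_dvd_natCast.mpr hpm) h1
  have h2 : (p : ℤ) ∣ (∑ i ∈ range p, (a : ℤ) ^ i) - p := by
    have he : (∑ i ∈ range p, (a : ℤ) ^ i) - p = ∑ i ∈ range p, ((a : ℤ) ^ i - 1) := by
      rw [Finset.sum_sub_distrib, Finset.sum_const, Finset.card_range]; ring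
    rw [he]
    refine Finset.dvd_sum fun i _ => dvd_trans hp1 ?_
    simpa using sub_dvd_pow_sub_pow (a : ℤ) 1 i
  have h3 : (p : ℤ) ∣ (∑ i ∈ range p, (a : ℤ) ^ i) := by
    have : (∑ i ∈ range p, (a : ℤ) ^ i) = ((∑ i ∈ range p, (a : ℤ) ^ i) - p) + p := by ring
    rw [this]; exact dvd_add h2 dvd_rfl
  have h4 : ((m * p : ℕ) : ℤ) ∣ (a : ℤ) ^ p - 1 := by
    push_cast
    rw [← geom_sum_mul]
    exact mul_comm (m : ℤ) p ▸ mul_dvd_mul h3 h1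
  have : (a : ℕ) ^ p ≡ 1 [MOD m * p] := by
    rw [Nat.modEq_iff_dvd]
    push_cast
    exact (dvd_sub_comm).mp h4
  exact this

lemma nt_aux {p : ℕ} (_hp : p.Prime) {u : ℕ} (hu : u ≡ 1 [MOD p]) :
    ∀ k, u ^ p ^ k ≡ 1 [MOD p ^ (k + 1)] := by
  intro k
  induction k with
  | zero => simpa using hu
  | succ k ih =>
      have := step_aux (p := p) (m := p ^ (k + 1)) ⟨p ^ k, by ring⟩ ih
      rw [show u ^ p ^ (k+1) = (u ^ p ^ k) ^ p by rw [← pow_mul, ← pow_succ]]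
      exact this

lemma fixed_trivial {p : ℕ} (hp : p.Prime) {P : Type*} [Group P] [Finite P]
    (hcyc : IsCyclic P) (hPp : IsPGroup p P) {ψ : MulAut P} (hψ : ψ ≠ 1)
    (hd : Nat.Coprime (orderOf ψ) p) {y : P} (hy : ψ y = y) : y = 1 := by
  haveI : Fact p.Prime := ⟨hp⟩
  obtain ⟨k, hk⟩ := (IsPGroup.iff_card).mp hPp
  rcases Nat.eq_zero_or_pos k with hk0 | hkpos
  · subst hk0
    have h1 : y ^ Nat.card P = 1 := pow_card_eq_one'
    rwa [hk, pow_zero, pow_one] at h1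
  obtain ⟨g, hg⟩ := hcyc.exists_generator
  have hog : orderOf g = p ^ k := by
    rw [orderOf_eq_card_of_forall_mem_zpowers hg, hk]
  obtain ⟨u, hu⟩ := mem_powers_iff_mem_zpowers.mpr (hg (ψ g))
  have hu' : ψ g = g ^ u := hu.symm
  have hpow : ∀ m : ℕ, (ψ ^ m) g = g ^ (u ^ m) := by
    intro m
    induction m with
    | zero => simp
    | succ m ih =>
        rw [pow_succ, MulAut.mul_apply, hu', map_pow, ih, ← pow_mul, ← pow_succ]
  have hgen : ∀ σ : MulAut P, σ g = g → σ = 1 := by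
    intro σ hσ
    ext x
    obtain ⟨a, rfl⟩ := hg x
    rw [map_zpow, hσ]; rfl
  have hup : ¬ u ≡ 1 [MOD p] := by
    intro hu1
    have hmod : u ^ p ^ (k - 1) ≡ 1 [MOD p ^ k] := by
      have := nt_aux hp hu1 (k - 1)
      rwa [Nat.sub_add_cancel hkpos] at this
    have h1 : (ψ ^ p ^ (k - 1)) g = g := by
      rw [hpow]
      have h2 : g ^ u ^ p ^ (k - 1) = g ^ 1 :=
        pow_eq_pow_iff_modEq.mpr (by rw [hog]; simpa using hmod)
      simpa using h2
    have h2 : ψ ^ p ^ (k - 1) = 1 := hgen _ h1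
    have h3 : orderOf ψ ∣ p ^ (k - 1) := orderOf_dvd_of_pow_eq_one h2
    have h4 : orderOf ψ = 1 := (hd.pow_right (k - 1)).eq_one_of_dvd h3
    exact hψ (orderOf_eq_one_iff.mp h4)
  obtain ⟨a, ha⟩ := mem_powers_iff_mem_zpowers.mpr (hg y)
  subst ha
  simp only at hy ⊢
  have h5 : g ^ (u * a) = g ^ a := by
    rw [pow_mul, ← hu', ← map_pow]
    exact hy
  have h6 : u * a ≡ a [MOD p ^ k] := by
    rw [← hog]; exact pow_eq_pow_iff_modEq.mp h5
  have h7 : (p : ℤ) ^ k ∣ (a : ℤ) * ((u : ℤ) - 1) := by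
    have h := (Nat.modEq_iff_dvd).mp h6
    push_cast at h
    have h2 : (a : ℤ) * ((u : ℤ) - 1) = -((a : ℤ) - (u : ℤ) * (a : ℤ)) := by ring
    rw [h2]
    exact dvd_neg.mpr h
  have hcop2 : IsCoprime ((p : ℤ) ^ k) ((u : ℤ) - 1) := by
    have hpd : ¬ (p : ℤ) ∣ (u : ℤ) - 1 := by
      intro hdvd
      exact hup ((Nat.modEq_iff_dvd).mpr (dvd_sub_comm.mp hdvd))
    exact ((Nat.prime_iff_prime_int.mp hp).coprime_iff_not_dvd.mpr hpd).pow_left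
  have h8 : (p : ℤ) ^ k ∣ (a : ℤ) := hcop2.dvd_of_dvd_mul_right h7
  have h9 : p ^ k ∣ a := by exact_mod_cast h8
  rw [← hog] at h9
  exact orderOf_dvd_iff_pow_eq_one.mp h9

open SemidirectProduct in
lemma sdp_pow {P F : Type*} [Group P] [Group F] (φ : F →* MulAut P) (x : P) (f : F) :
    ∀ n : ℕ, (⟨x, f⟩ : P ⋊[φ] F) ^ n =
      ⟨((List.range n).map fun i => ((φ f) ^ i) x).prod, f ^ n⟩ := by
  intro n
  induction n with
  | zero => refine SemidirectProduct.ext ?_ ?_ <;> simp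
  | succ n ih =>
      rw [pow_succ', ih, SemidirectProduct.mul_def]
      refine SemidirectProduct.ext ?_ (by simp [pow_succ'])
      simp only
      rw [map_list_prod, List.map_map, List.range_succ_eq_map, List.map_cons, List.prod_cons,
        pow_zero, MulAut.one_apply, List.map_map]
      congr 1
      refine congrArg List.prod (List.map_congr_left ?_)
      intro i _
      simp [Function.comp, pow_succ', MulAut.mul_apply]

lemma nprod_eq_one {p : ℕ} (hp : p.Prime) {P : Type*} [Group P] [Finite P]
    (hcyc : IsCyclic P) (hPp : IsPGroup p P)
    (hcomm : ∀ a b : P, a * b = b * a)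
    {ψ : MulAut P} (hψ : ψ ≠ 1) (hd : Nat.Coprime (orderOf ψ) p)
    {n : ℕ} (hn : ψ ^ n = 1) (x : P) :
    ((List.range n).map fun i => (ψ ^ i) x).prod = 1 := by
  set T : ℕ → P := fun i => (ψ ^ i) x with hT
  set y := ((List.range n).map T).prod with hy
  suffices hfix : ψ y = y from fixed_trivial hp hcyc hPp hψ hd hfix
  have hA : ((List.range (n + 1)).map T).prod = y * T n := by
    rw [List.range_succ, List.map_append, List.prod_append]; simp [hy]
  have hB : ((List.range (n + 1)).map T).prod = T 0 * ψ y := by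
    rw [List.range_succ_eq_map, List.map_cons, List.prod_cons]
    congr 1
    rw [hy, map_list_prod, List.map_map, List.map_map]
    refine congrArg List.prod (List.map_congr_left ?_)
    intro i _
    simp [hT, Function.comp, pow_succ', MulAut.mul_apply]
  have hTn : T n = T 0 := by simp [hT, hn]
  have h1 : T 0 * ψ y = y * T 0 := by rw [← hB, hA, hTn]
  have h2 : T 0 * ψ y = T 0 * y := by rw [h1, hcomm]
  exact mul_left_cancel h2

theorem rho_semidirect (p : ℕ) (hp : p.Prime) (P F : Type*)
    [Group P] [Finite P] [Group F] [Finite F] [Nontrivial F]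
    (hcyc : IsCyclic P) (hPp : IsPGroup p P)
    (hcop : Nat.Coprime p (Nat.card F)) (φ : F →* MulAut P) :
    rho (P ⋊[φ] F) = rho P ^ Nat.card φ.ker * rho F ^ Nat.card P ∧
      (∀ f : F, f ∈ φ.ker ↔ ∀ x : P,
        (SemidirectProduct.inl x : P ⋊[φ] F) * SemidirectProduct.inr f =
          SemidirectProduct.inr f * SemidirectProduct.inl x) := by
  classical
  haveI : Fact p.Prime := ⟨hp⟩
  letI : Fintype P := Fintype.ofFinite P
  letI : Fintype F := Fintype.ofFinite F
  have hcomm : ∀ a b : P, a * b = b * a := by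
    haveI := hcyc
    letI : CommGroup P := IsCyclic.commGroup
    exact fun a b => mul_comm a b
  -- second part
  have hker : ∀ f : F, f ∈ φ.ker ↔ ∀ x : P,
      (inl x : P ⋊[φ] F) * inr f = inr f * inl x := by
    intro f
    constructor
    · intro hf x
      have h1 : φ f = 1 := hf
      refine SemidirectProduct.ext ?_ ?_ <;> simp [h1]
    · intro h
      have h1 : ∀ x : P, φ f x = x := by
        intro x
        have h2 := congrArg SemidirectProduct.left (h x)
        simpa using h2.symm
      exact MonoidHom.mem_ker.mpr (MulEquiv.ext h1)
  refine ⟨?_, hker⟩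
  -- coprimality of element orders
  have hcopx : ∀ (x : P) (f : F), Nat.Coprime (orderOf x) (orderOf f) := by
    intro x f
    obtain ⟨j, hj⟩ := IsPGroup.iff_orderOf.mp hPp x
    have h1 : Nat.Coprime p (orderOf f) :=
      Nat.Coprime.coprime_dvd_right (orderOf_dvd_natCard f) hcop
    rw [hj]
    exact h1.pow_left j
  -- order formula, kernel case
  have horder_ker : ∀ (x : P) (f : F), f ∈ φ.ker →
      orderOf (⟨x, f⟩ : P ⋊[φ] F) = orderOf x * orderOf f := by
    intro x f hf
    have hfe : φ f = 1 := hf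
    have hxf : (⟨x, f⟩ : P ⋊[φ] F) = inl x * inr f := by
      refine SemidirectProduct.ext ?_ ?_ <;> simp
    have hc : Commute (inl x : P ⋊[φ] F) (inr f) := by
      show _ * _ = _ * _
      refine SemidirectProduct.ext ?_ ?_ <;> simp [hfe]
    have hco : Nat.Coprime (orderOf (inl x : P ⋊[φ] F)) (orderOf (inr f : P ⋊[φ] F)) := by
      rw [orderOf_injective _ SemidirectProduct.inl_injective,
        orderOf_injective _ SemidirectProduct.inr_injective]
      exact hcopx x f
    rw [hxf, hc.orderOf_mul_eq_mul_orderOf_of_coprime hco,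
      orderOf_injective _ SemidirectProduct.inl_injective,
      orderOf_injective _ SemidirectProduct.inr_injective]
  -- order formula, non-kernel case
  have horder_nker : ∀ (x : P) (f : F), f ∉ φ.ker →
      orderOf (⟨x, f⟩ : P ⋊[φ] F) = orderOf f := by
    intro x f hf
    have hψ : φ f ≠ 1 := fun h => hf (MonoidHom.mem_ker.mpr h)
    have hψn : (φ f) ^ orderOf f = 1 := by
      rw [← map_pow, pow_orderOf_eq_one, map_one]
    have hdco : Nat.Coprime (orderOf (φ f)) p :=
      (Nat.Coprime.coprime_dvd_right
        ((orderOf_map_dvd φ f).trans (orderOf_dvd_natCard f)) hcop).symm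
    have hN := nprod_eq_one hp hcyc hPp hcomm hψ hdco hψn x
    have hpow1 : (⟨x, f⟩ : P ⋊[φ] F) ^ orderOf f = 1 := by
      rw [sdp_pow, hN, pow_orderOf_eq_one]
      rfl
    have h1 : orderOf (⟨x, f⟩ : P ⋊[φ] F) ∣ orderOf f := orderOf_dvd_of_pow_eq_one hpow1
    have h2 : orderOf f ∣ orderOf (⟨x, f⟩ : P ⋊[φ] F) := by
      have h3 := orderOf_map_dvd (rightHom (φ := φ)) ⟨x, f⟩
      simpa using h3
    exact Nat.dvd_antisymm h1 h2
  -- product computation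
  let E : P × F ≃ P ⋊[φ] F :=
    ⟨fun q => ⟨q.1, q.2⟩, fun g => (g.left, g.right), fun q => rfl,
      fun g => by cases g; rfl⟩
  haveI : Finite (P ⋊[φ] F) := Finite.of_equiv _ E
  letI : Fintype (P ⋊[φ] F) := Fintype.ofFinite _
  have hprod : rho (P ⋊[φ] F) = ∏ f : F, ∏ x : P, orderOf (⟨x, f⟩ : P ⋊[φ] F) := by
    rw [rho, finprod_eq_prod_of_fintype, ← Equiv.prod_comp E fun g => orderOf g]
    rw [Fintype.prod_prod_type]
    rw [Finset.prod_comm]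
    exact Finset.prod_congr rfl fun f _ => Finset.prod_congr rfl fun x _ => rfl
  have hfprod : ∀ f : F, ∏ x : P, orderOf (⟨x, f⟩ : P ⋊[φ] F) =
      (if f ∈ φ.ker then rho P else 1) * orderOf f ^ Nat.card P := by
    intro f
    rw [Nat.card_eq_fintype_card]
    by_cases hf : f ∈ φ.ker
    · simp only [hf, if_true]
      calc ∏ x : P, orderOf (⟨x, f⟩ : P ⋊[φ] F)
          = ∏ x : P, orderOf x * orderOf f := by
            exact Finset.prod_congr rfl fun x _ => horder_ker x f hf
        _ = (∏ x : P, orderOf x) * ∏ x : P, orderOf f := Finset.prod_mul_distrib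
        _ = rho P * orderOf f ^ Fintype.card P := by
            rw [Finset.prod_const, Finset.card_univ, rho, finprod_eq_prod_of_fintype]
    · simp only [hf, if_false, one_mul]
      calc ∏ x : P, orderOf (⟨x, f⟩ : P ⋊[φ] F)
          = ∏ _x : P, orderOf f := Finset.prod_congr rfl fun x _ => horder_nker x f hf
        _ = orderOf f ^ Fintype.card P := by
            rw [Finset.prod_const, Finset.card_univ]
  have hcard : (Finset.univ.filter fun f : F => f ∈ φ.ker).card = Nat.card φ.ker := by
    rw [Nat.card_eq_fintype_card, Fintype.card_subtype]
  calc rho (P ⋊[φ] F)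
      = ∏ f : F, ((if f ∈ φ.ker then rho P else 1) * orderOf f ^ Nat.card P) := by
        rw [hprod]; exact Finset.prod_congr rfl fun f _ => hfprod f
    _ = (∏ f : F, if f ∈ φ.ker then rho P else 1) * ∏ f : F, orderOf f ^ Nat.card P :=
        Finset.prod_mul_distrib
    _ = rho P ^ Nat.card φ.ker * rho F ^ Nat.card P := by
        rw [Finset.prod_ite, Finset.prod_const, Finset.prod_const_one, mul_one, hcard]
        congr 1
        rw [rho, finprod_eq_prod_of_fintype, Finset.prod_pow]
end

section
/- For distinct odd primes q and r, ρ(ℤ/2qrℤ) = 2^{qr} · q^{2r(q−1)} · r^{2q(r−1)}, and hence Exp_ρ(ℤ/2qrℤ) = {qr, 2r(q−1), 2q(r−1)}. -/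
open scoped MatrixGroups

lemma rho_multiplicative (A : Type*) [AddMonoid A] [Fintype A] :
    rho (Multiplicative A) = ∏ x : A, addOrderOf x := by
  rw [rho, finprod_eq_prod_of_fintype]
  exact Fintype.prod_equiv Multiplicative.toAdd _ _ (fun g => rfl)

lemma prod_addOrderOf_zmod_prime (p : ℕ) [NeZero p] (hp : p.Prime) :
    ∏ x : ZMod p, addOrderOf x = p ^ (p - 1) := by
  have h0 : addOrderOf (0 : ZMod p) = 1 := addOrderOf_zero
  rw [← Finset.prod_erase Finset.univ h0]
  have h : ∀ x ∈ Finset.univ.erase (0 : ZMod p), addOrderOf x = p := by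
    intro x hx
    have hx0 : x ≠ 0 := (Finset.mem_erase.mp hx).1
    have hd : addOrderOf x ∣ p := by
      have := addOrderOf_dvd_card (x := x)
      rwa [ZMod.card] at this
    rcases hp.eq_one_or_self_of_dvd _ hd with h1 | h1
    · exact absurd (AddMonoid.addOrderOf_eq_one_iff.mp h1) hx0
    · exact h1
  rw [Finset.prod_congr rfl h, Finset.prod_const,
    Finset.card_erase_of_mem (Finset.mem_univ _), Finset.card_univ, ZMod.card]

lemma prod_addOrderOf_zmod_mul (m n : ℕ) [NeZero m] [NeZero n]
    (h : Nat.Coprime m n) :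
    ∏ x : ZMod (m * n), addOrderOf x =
      (∏ x : ZMod m, addOrderOf x) ^ n * (∏ x : ZMod n, addOrderOf x) ^ m := by
  haveI : NeZero (m * n) := ⟨Nat.mul_ne_zero (NeZero.ne m) (NeZero.ne n)⟩
  let e : ZMod (m * n) ≃+ ZMod m × ZMod n := (ZMod.chineseRemainder h).toAddEquiv
  have key : ∀ y : ZMod m × ZMod n, addOrderOf y = addOrderOf y.1 * addOrderOf y.2 := by
    intro y
    rw [Prod.addOrderOf]
    refine Nat.Coprime.lcm_eq_mul ?_
    have h1 : addOrderOf y.1 ∣ m := by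
      have := addOrderOf_dvd_card (x := y.1); rwa [ZMod.card] at this
    have h2 : addOrderOf y.2 ∣ n := by
      have := addOrderOf_dvd_card (x := y.2); rwa [ZMod.card] at this
    exact Nat.Coprime.coprime_dvd_left h1 (Nat.Coprime.coprime_dvd_right h2 h)
  have := Fintype.prod_equiv e.toEquiv (fun x => addOrderOf x)
      (fun y => addOrderOf y) (fun x => (AddEquiv.addOrderOf_eq e x).symm)
  rw [this]
  calc ∏ y : ZMod m × ZMod n, addOrderOf y
      = ∏ y : ZMod m × ZMod n, addOrderOf y.1 * addOrderOf y.2 :=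
        Finset.prod_congr rfl fun y _ => key y
    _ = (∏ x : ZMod m, addOrderOf x) ^ n * (∏ x : ZMod n, addOrderOf x) ^ m := by
        rw [Fintype.prod_prod_type]
        simp only [Finset.prod_mul_distrib, Finset.prod_const, Finset.prod_pow,
          Finset.card_univ, ZMod.card]

theorem rho_Z2qr (q r : ℕ) (hq : q.Prime) (hr : r.Prime)
    (hqodd : Odd q) (hrodd : Odd r) (hqr : q ≠ r) :
    rho (Multiplicative (ZMod (2 * q * r))) =
        2 ^ (q * r) * q ^ (2 * r * (q - 1)) * r ^ (2 * q * (r - 1)) ∧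
      expRho (Multiplicative (ZMod (2 * q * r))) =
        ({q * r, 2 * r * (q - 1), 2 * q * (r - 1)} : Finset ℕ) := by
  have hq2 : q ≠ 2 := by rintro rfl; simp [Nat.odd_iff] at hqodd
  have hr2 : r ≠ 2 := by rintro rfl; simp [Nat.odd_iff] at hrodd
  have hcop2q : Nat.Coprime 2 q := (Nat.coprime_primes Nat.prime_two hq).mpr (Ne.symm hq2)
  have hcop2r : Nat.Coprime 2 r := (Nat.coprime_primes Nat.prime_two hr).mpr (Ne.symm hr2)
  have hcopqr : Nat.Coprime q r := (Nat.coprime_primes hq hr).mpr hqr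
  have hcop : Nat.Coprime (2 * q) r := Nat.coprime_mul_iff_left.mpr ⟨hcop2r, hcopqr⟩
  haveI : NeZero q := ⟨hq.ne_zero⟩
  haveI : NeZero r := ⟨hr.ne_zero⟩
  haveI : NeZero (2 * q) := ⟨Nat.mul_ne_zero two_ne_zero hq.ne_zero⟩
  haveI : NeZero (2 * q * r) := ⟨Nat.mul_ne_zero (Nat.mul_ne_zero two_ne_zero hq.ne_zero) hr.ne_zero⟩
  have hP : rho (Multiplicative (ZMod (2 * q * r))) =
      2 ^ (q * r) * q ^ (2 * r * (q - 1)) * r ^ (2 * q * (r - 1)) := by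
    rw [rho_multiplicative,
      prod_addOrderOf_zmod_mul (2 * q) r hcop,
      prod_addOrderOf_zmod_mul 2 q hcop2q,
      prod_addOrderOf_zmod_prime 2 Nat.prime_two,
      prod_addOrderOf_zmod_prime q hq,
      prod_addOrderOf_zmod_prime r hr]
    ring
  refine ⟨hP, ?_⟩
  have hq1 : q - 1 ≠ 0 := by have := hq.two_le; omega
  have hr1 : r - 1 ≠ 0 := by have := hr.two_le; omega
  have ha : q * r ≠ 0 := Nat.mul_ne_zero hq.ne_zero hr.ne_zero
  have hb : 2 * r * (q - 1) ≠ 0 := Nat.mul_ne_zero (Nat.mul_ne_zero two_ne_zero hr.ne_zero) hq1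
  have hc : 2 * q * (r - 1) ≠ 0 := Nat.mul_ne_zero (Nat.mul_ne_zero two_ne_zero hq.ne_zero) hr1
  have h2pow : (2 : ℕ) ^ (q * r) ≠ 0 := pow_ne_zero _ two_ne_zero
  have hqpow : q ^ (2 * r * (q - 1)) ≠ 0 := pow_ne_zero _ hq.ne_zero
  have hrpow : r ^ (2 * q * (r - 1)) ≠ 0 := pow_ne_zero _ hr.ne_zero
  unfold expRho
  rw [hP]
  have hsupp : (2 ^ (q * r) * q ^ (2 * r * (q - 1)) * r ^ (2 * q * (r - 1))).factorization.support
      = ({2, q, r} : Finset ℕ) := by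
    rw [Nat.support_factorization, Nat.primeFactors_mul (Nat.mul_ne_zero h2pow hqpow) hrpow,
      Nat.primeFactors_mul h2pow hqpow,
      Nat.primeFactors_pow _ ha, Nat.primeFactors_pow _ hb, Nat.primeFactors_pow _ hc,
      Nat.Prime.primeFactors Nat.prime_two, hq.primeFactors, hr.primeFactors]
    ext x
    simp [or_assoc]
  have hfact : (2 ^ (q * r) * q ^ (2 * r * (q - 1)) * r ^ (2 * q * (r - 1))).factorization
      = Finsupp.single 2 (q * r) + Finsupp.single q (2 * r * (q - 1))
        + Finsupp.single r (2 * q * (r - 1)) := by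
    rw [Nat.factorization_mul (Nat.mul_ne_zero h2pow hqpow) hrpow,
      Nat.factorization_mul h2pow hqpow,
      Nat.Prime.factorization_pow Nat.prime_two,
      Nat.Prime.factorization_pow hq, Nat.Prime.factorization_pow hr]
  rw [hsupp, hfact]
  rw [show ({2, q, r} : Finset ℕ) = insert 2 (insert q {r}) from rfl,
    Finset.image_insert, Finset.image_insert, Finset.image_singleton]
  simp [Finsupp.single_apply, hq2, hr2, hqr, Ne.symm hq2, Ne.symm hr2, Ne.symm hqr]
end
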